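/- A permutation π is separable if and only if its interval poset is binary, i.e., every element of P(π) covers at most two elements. -/

import Mathlib

/-- A set of values in `Fin n` is consecutive if it is closed under betweenness. -/
def Consec {n : ℕ} (S : Finset (Fin n)) : Prop :=
  ∀ ⦃x y z : Fin n⦄, x ∈ S → z ∈ S → x ≤ y → y ≤ z → y ∈ S

/-- `I` is an interval of the permutation `π` if both `I` and its preimage under `π`
are sets of consecutive integers. -/
def IsInterval {n : ℕ} (π : Equiv.Perm (Fin n)) (I : Finset (Fin n)) : Prop :=
  Consec I ∧ Consec (I.image π.symm)

/-- The 1-based integer interval `[a,b]` viewed inside `Fin n`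
(the element `x : Fin n` represents the value `x.val + 1`). -/
def ivl (n a b : ℕ) : Finset (Fin n) :=
  Finset.univ.filter (fun x => a ≤ x.val + 1 ∧ x.val + 1 ≤ b)

/-- J is covered by I in the interval poset of π. -/
def IntervalCover {n : ℕ} (π : Equiv.Perm (Fin n)) (I J : Finset (Fin n)) : Prop :=
  J ⊂ I ∧ ¬ ∃ K : Finset (Fin n), IsInterval π K ∧ K.Nonempty ∧ J ⊂ K ∧ K ⊂ I

/-- The Hasse diagram of the interval poset of π, as an undirected simple graph on the
nonempty intervals of π, with an edge for each covering relation. -/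
def HasseGraph (n : ℕ) (π : Equiv.Perm (Fin n)) :
    SimpleGraph {I : Finset (Fin n) // IsInterval π I ∧ I.Nonempty} where
  Adj x y := IntervalCover π x.1 y.1 ∨ IntervalCover π y.1 x.1
  symm := ⟨fun _ _ h => h.symm⟩
  loopless := ⟨fun x h => by
    rcases h with h | h <;> exact absurd h.1 (ssubset_irrefl _)⟩

/-- π contains the pattern 2413. -/
def Contains2413 {n : ℕ} (π : Equiv.Perm (Fin n)) : Prop :=
  ∃ i₁ i₂ i₃ i₄ : Fin n, i₁ < i₂ ∧ i₂ < i₃ ∧ i₃ < i₄ ∧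
    π i₃ < π i₁ ∧ π i₁ < π i₄ ∧ π i₄ < π i₂

/-- π contains the pattern 3142. -/
def Contains3142 {n : ℕ} (π : Equiv.Perm (Fin n)) : Prop :=
  ∃ i₁ i₂ i₃ i₄ : Fin n, i₁ < i₂ ∧ i₂ < i₃ ∧ i₃ < i₄ ∧
    π i₂ < π i₄ ∧ π i₄ < π i₁ ∧ π i₁ < π i₃

/-!
If `π` avoids 2413 and 3142, so does `π⁻¹`, and its restriction to any set of at least two
positions is a direct or skew sum: adding positions from left to right, a new last entry either
preserves a split or creates a 3142. Applied to `π⁻¹` on the values of an interval `I`, this cuts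
`I` at a value threshold into two intervals `A < B`. Every child of `I` contains `A` or `B`; the
children containing `A` all contain `min I`, so they are nested and hence equal, and likewise for
`B` and `max I`.

Conversely, an occurrence of 2413 or 3142 at positions `a < b < c < d` has `π a` between `π b` and
`π c` and `π d` between `π a` and `π b`, so every interval containing two of `π a, π b, π c`
contains all of them. The smallest interval containing these three points then has three distinct
children, one through each point.
-/

section Consec

variable {n : ℕ} {A B S T : Finset (Fin n)}

theorem consec_singleton (v : Fin n) : Consec {v} := by
  intro x y z hx hz hxy hyz
  rw [Finset.mem_singleton] at hx hz ⊢
  subst hx hz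
  exact le_antisymm hyz hxy

theorem Consec.mem_of_mem_uIcc (hS : Consec S) {x y z : Fin n} (hx : x ∈ S) (hz : z ∈ S)
    (hy : y ∈ Set.uIcc x z) : y ∈ S := by
  rcases Set.mem_uIcc.1 hy with ⟨hxy, hyz⟩ | ⟨hzy, hyx⟩
  exacts [hS hx hz hxy hyz, hS hz hx hzy hyx]

theorem Consec.union (hA : Consec A) (hB : Consec B) (hAB : (A ∩ B).Nonempty) :
    Consec (A ∪ B) := by
  obtain ⟨w, hw⟩ := hAB
  rw [Finset.mem_inter] at hw
  intro x y z hx hz hxy hyz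
  rw [Finset.mem_union] at hx hz ⊢
  rcases le_total y w with hyw | hwy
  · exact hx.imp (fun hx => hA hx hw.1 hxy hyw) (fun hx => hB hx hw.2 hxy hyw)
  · exact hz.imp (fun hz => hA hw.1 hz hwy hyz) (fun hz => hB hw.2 hz hwy hyz)

theorem Consec.left_of_union (h : Consec (A ∪ B))
    (hAB : (∀ a ∈ A, ∀ b ∈ B, a < b) ∨ ∀ a ∈ A, ∀ b ∈ B, b < a) : Consec A := by
  intro x y z hx hz hxy hyz
  refine (Finset.mem_union.1 (h (Finset.mem_union_left B hx) (Finset.mem_union_left B hz)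
    hxy hyz)).resolve_right fun hy => ?_
  rcases hAB with hAB | hAB
  · exact lt_irrefl y ((hAB z hz y hy).trans_le' hyz)
  · exact lt_irrefl y ((hAB x hx y hy).trans_le hxy)

theorem Consec.of_union (h : Consec (A ∪ B))
    (hAB : (∀ a ∈ A, ∀ b ∈ B, a < b) ∨ ∀ a ∈ A, ∀ b ∈ B, b < a) : Consec A ∧ Consec B := by
  have hBA : (∀ b ∈ B, ∀ a ∈ A, b < a) ∨ ∀ b ∈ B, ∀ a ∈ A, a < b :=
    hAB.symm.imp (fun hlt b hb a ha => hlt a ha b hb) (fun hlt b hb a ha => hlt a ha b hb)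
  exact ⟨h.left_of_union hAB, (Finset.union_comm A B ▸ h : Consec (B ∪ A)).left_of_union hBA⟩

theorem Consec.subset_or_subset (hS : Consec S) (hT : Consec T) {m : Fin n} (hmS : m ∈ S)
    (hmT : m ∈ T) (hm : (∀ x ∈ S ∪ T, m ≤ x) ∨ ∀ x ∈ S ∪ T, x ≤ m) : S ⊆ T ∨ T ⊆ S := by
  refine or_iff_not_imp_left.2 fun hST t ht => ?_
  obtain ⟨s, hs, hsT⟩ := Finset.not_subset.1 hST
  by_contra htS
  have hs' := Finset.mem_union_left T hs
  have ht' := Finset.mem_union_right S ht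
  rcases le_total s t with hst | hts <;> rcases hm with hm | hm
  · exact hsT (hT hmT ht (hm s hs') hst)
  · exact htS (hS hs hmS hst (hm t ht'))
  · exact htS (hS hmS hs (hm t ht') hts)
  · exact hsT (hT ht hmT hts (hm s hs'))

end Consec

section IsInterval

variable {n : ℕ} {π : Equiv.Perm (Fin n)} {A B I J K : Finset (Fin n)}

theorem isInterval_univ (π : Equiv.Perm (Fin n)) : IsInterval π Finset.univ := by
  refine ⟨fun _ y _ _ _ _ _ => Finset.mem_univ y, ?_⟩
  rw [Finset.image_univ_equiv]
  exact fun _ y _ _ _ _ _ => Finset.mem_univ y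

theorem isInterval_singleton (π : Equiv.Perm (Fin n)) (v : Fin n) : IsInterval π {v} := by
  refine ⟨consec_singleton v, ?_⟩
  rw [Finset.image_singleton]
  exact consec_singleton _

theorem IsInterval.union (hA : IsInterval π A) (hB : IsInterval π B) (hAB : (A ∩ B).Nonempty) :
    IsInterval π (A ∪ B) := by
  classical
  refine ⟨hA.1.union hB.1 hAB, ?_⟩
  rw [Finset.image_union]
  exact hA.2.union hB.2 ((hAB.image π.symm).mono (Finset.image_inter_subset _ _ _))

theorem IsInterval.apply_mem_of_le (hK : IsInterval π K) {x y z : Fin n} (hx : π x ∈ K)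
    (hz : π z ∈ K) (hxy : x ≤ y) (hyz : y ≤ z) : π y ∈ K := by
  have hpos : ∀ w, w ∈ K.image π.symm ↔ π w ∈ K := fun w => by
    simp [Finset.mem_image, Equiv.symm_apply_eq]
  exact (hpos y).1 (hK.2 ((hpos x).2 hx) ((hpos z).2 hz) hxy hyz)

theorem IsInterval.of_union (h : IsInterval π (A ∪ B)) (hv : ∀ a ∈ A, ∀ b ∈ B, a < b)
    (hp : (∀ a ∈ A, ∀ b ∈ B, π.symm a < π.symm b) ∨ ∀ a ∈ A, ∀ b ∈ B, π.symm b < π.symm a) :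
    IsInterval π A ∧ IsInterval π B := by
  classical
  have hpos := h.2
  rw [Finset.image_union] at hpos
  obtain ⟨hA, hB⟩ := h.1.of_union (Or.inl hv)
  obtain ⟨hA', hB'⟩ := hpos.of_union (by simpa only [Finset.forall_mem_image] using hp)
  exact ⟨⟨hA, hA'⟩, ⟨hB, hB'⟩⟩

theorem IntervalCover.eq_or_eq (hc : IntervalCover π I J) (hJ : J.Nonempty)
    (hK : IsInterval π K) (hJK : J ⊆ K) (hKI : K ⊆ I) : K = J ∨ K = I := by
  by_contra! hne
  exact hc.2 ⟨K, hK, hJ.mono hJK, Finset.ssubset_iff_subset_ne.2 ⟨hJK, hne.1.symm⟩,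
    Finset.ssubset_iff_subset_ne.2 ⟨hKI, hne.2⟩⟩

theorem IntervalCover.eq_of_subset {J₁ J₂ : Finset (Fin n)} (hc₁ : IntervalCover π I J₁)
    (hc₂ : IntervalCover π I J₂) (hJ₁ : J₁.Nonempty) (hJ₂ : IsInterval π J₂) (h : J₁ ⊆ J₂) :
    J₁ = J₂ :=
  ((hc₁.eq_or_eq hJ₁ hJ₂ h hc₂.1.subset).resolve_right hc₂.1.ne).symm

theorem IntervalCover.eq_of_mem {J₁ J₂ : Finset (Fin n)} (hc₁ : IntervalCover π I J₁)
    (hc₂ : IntervalCover π I J₂) (hJ₁ : IsInterval π J₁) (hJ₂ : IsInterval π J₂) {m : Fin n}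
    (hm₁ : m ∈ J₁) (hm₂ : m ∈ J₂) (hm : (∀ x ∈ I, m ≤ x) ∨ ∀ x ∈ I, x ≤ m) : J₁ = J₂ := by
  have hsub : J₁ ∪ J₂ ⊆ I := Finset.union_subset hc₁.1.subset hc₂.1.subset
  rcases hJ₁.1.subset_or_subset hJ₂.1 hm₁ hm₂
    (hm.imp (fun h x hx => h x (hsub hx)) (fun h x hx => h x (hsub hx))) with h | h
  · exact hc₁.eq_of_subset hc₂ ⟨m, hm₁⟩ hJ₂ h
  · exact (hc₂.eq_of_subset hc₁ ⟨m, hm₂⟩ hJ₁ h).symm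

theorem IntervalCover.subset_or_subset (hc : IntervalCover π I J) (hJ : IsInterval π J)
    (hJne : J.Nonempty) (hA : IsInterval π A) (hB : IsInterval π B) (hAne : A.Nonempty)
    (hAB : Disjoint A B) (hI : A ∪ B = I) : A ⊆ J ∨ B ⊆ J := by
  subst hI
  by_cases hJA : (J ∩ A).Nonempty
  · refine or_iff_not_imp_left.2 fun hAJ b hb => ?_
    have hJA_eq : J ∪ A = A ∪ B :=
      (hc.eq_or_eq hJne (hJ.union hA hJA) Finset.subset_union_left
        (Finset.union_subset hc.1.subset Finset.subset_union_left)).resolve_left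
        fun h => hAJ (h ▸ Finset.subset_union_right)
    have hb' : b ∈ J ∪ A := hJA_eq ▸ Finset.mem_union_right A hb
    exact (Finset.mem_union.1 hb').resolve_right (Finset.disjoint_right.1 hAB hb)
  · have hJB : J ⊆ B := fun x hx => (Finset.mem_union.1 (hc.1.subset hx)).resolve_left
      fun hxA => hJA ⟨x, Finset.mem_inter.2 ⟨hx, hxA⟩⟩
    have hBI : B ≠ A ∪ B := fun h => by
      obtain ⟨a, ha⟩ := hAne
      exact Finset.disjoint_left.1 hAB ha (h ▸ Finset.mem_union_left B ha)
    exact Or.inr ((hc.eq_or_eq hJne hB hJB Finset.subset_union_right).resolve_right hBI).le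

theorem exists_intervalCover_of_ssubset (hJ : IsInterval π J) (hJI : J ⊂ I) :
    ∃ C, IsInterval π C ∧ J ⊆ C ∧ IntervalCover π I C := by
  classical
  obtain ⟨C, hC, hmax⟩ := (Finset.univ.filter fun K => IsInterval π K ∧ J ⊆ K ∧ K ⊂ I)
    |>.exists_max_image Finset.card ⟨J, by simpa using ⟨hJ, hJI⟩⟩
  simp only [Finset.mem_filter, Finset.mem_univ, true_and] at hC hmax
  obtain ⟨hC, hJC, hCI⟩ := hC
  refine ⟨C, hC, hJC, hCI, fun ⟨K, hK, _, hCK, hKI⟩ => ?_⟩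
  exact (Finset.card_lt_card hCK).not_ge (hmax K ⟨hK, hJC.trans hCK.subset, hKI⟩)

end IsInterval

section Split

variable {n : ℕ} {σ π : Equiv.Perm (Fin n)} {S : Finset (Fin n)}

/-- `σ` restricted to the positions `S` is the direct sum `⊕` of its parts at positions `≤ t` and
`> t`; skew sums `⊖` are direct sums of the complement `σ.trans Fin.revPerm`. -/
def SumSplitAt (σ : Equiv.Perm (Fin n)) (S : Finset (Fin n)) (t : Fin n) : Prop :=
  ∀ x ∈ S, ∀ y ∈ S, x ≤ t → t < y → σ x < σ y

theorem sumSplitAt_trans_revPerm {t : Fin n} :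
    SumSplitAt (σ.trans Fin.revPerm) S t ↔ ∀ x ∈ S, ∀ y ∈ S, x ≤ t → t < y → σ y < σ x := by
  simp only [SumSplitAt, Equiv.trans_apply, Fin.revPerm_apply, Fin.rev_lt_rev]

theorem contains2413_of_contains3142_trans_revPerm (h : Contains3142 (σ.trans Fin.revPerm)) :
    Contains2413 σ := by
  obtain ⟨a, b, c, d, hab, hbc, hcd, h₁, h₂, h₃⟩ := h
  simp only [Equiv.trans_apply, Fin.revPerm_apply, Fin.rev_lt_rev] at h₁ h₂ h₃
  exact ⟨a, b, c, d, hab, hbc, hcd, h₃, h₂, h₁⟩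

theorem contains3142_of_contains2413_symm (h : Contains2413 π.symm) : Contains3142 π := by
  obtain ⟨a, b, c, d, hab, hbc, hcd, h₁, h₂, h₃⟩ := h
  exact ⟨π.symm c, π.symm a, π.symm d, π.symm b, h₁, h₂, h₃, by simpa using hab,
    by simpa using hbc, by simpa using hcd⟩

theorem contains2413_of_contains3142_symm (h : Contains3142 π.symm) : Contains2413 π := by
  obtain ⟨a, b, c, d, hab, hbc, hcd, h₁, h₂, h₃⟩ := h
  exact ⟨π.symm b, π.symm d, π.symm a, π.symm c, h₁, h₂, h₃, by simpa using hab,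
    by simpa using hbc, by simpa using hcd⟩

theorem sumSplitAt_insert_of_forall_lt {c t : Fin n} (hlt : ∀ x ∈ S, σ x < σ c)
    (hS : ∀ x ∈ S, x ≤ t) (htc : t < c) : SumSplitAt σ (insert c S) t := by
  intro x hx y hy hxt hty
  obtain rfl | hyS := Finset.mem_insert.1 hy
  · obtain rfl | hxS := Finset.mem_insert.1 hx
    · exact absurd (htc.trans_le hxt) (lt_irrefl _)
    · exact hlt x hxS
  · exact absurd (hS y hyS) (not_le.2 hty)

theorem sumSplitAt_insert (h31 : ¬Contains3142 σ) {c t u : Fin n} (hc : ∀ x ∈ S, x < c)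
    (ht : t ∈ S) (hu : u ∈ S) (htu : t < u) (hsplit : SumSplitAt σ S t) :
    ∃ t' ∈ S, SumSplitAt σ (insert c S) t' ∨ SumSplitAt (σ.trans Fin.revPerm) (insert c S) t' := by
  classical
  have mem_of_le : ∀ {x s}, s ∈ S → x ∈ insert c S → x ≤ s → x ∈ S := fun hs hx hxs =>
    (Finset.mem_insert.1 hx).resolve_left fun hxc => (hc _ hs).not_ge (hxc ▸ hxs)
  rcases (S.filter fun x => σ x < σ c).eq_empty_or_nonempty with hlow | hlow
  · refine ⟨S.max' ⟨t, ht⟩, S.max'_mem _, Or.inr <| sumSplitAt_insert_of_forall_lt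
      (fun x hx => ?_) (fun x hx => S.le_max' x hx) (hc _ (S.max'_mem _))⟩
    simp only [Equiv.trans_apply, Fin.revPerm_apply, Fin.rev_lt_rev]
    exact lt_of_le_of_ne (not_lt.1 (Finset.filter_eq_empty_iff.1 hlow hx))
      (σ.injective.ne (hc x hx).ne')
  -- Split just after `m`, the last position with value below `σ c`; if `m` lies beyond `t`,
  -- the old split at `t` survives.
  set m := (S.filter fun x => σ x < σ c).max' hlow
  obtain ⟨hmS, hmc⟩ := Finset.mem_filter.1 ((S.filter fun x => σ x < σ c).max'_mem hlow)
  have hmax : ∀ y ∈ S, σ y < σ c → y ≤ m := fun y hy hyc =>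
    Finset.le_max' _ y (Finset.mem_filter.2 ⟨hy, hyc⟩)
  rcases le_or_gt m t with hmt | htm
  · refine ⟨m, hmS, Or.inl fun x hx y hy hxm hmy => ?_⟩
    have hxS := mem_of_le hmS hx hxm
    have hxc : σ x < σ c := by
      by_contra! hcx
      have hxm' : x < m := lt_of_le_of_ne hxm fun h => by
        rw [h] at hcx
        exact (hmc.trans_le hcx).false
      exact h31 ⟨x, m, u, c, hxm', hmt.trans_lt htu, hc u hu, hmc,
        lt_of_le_of_ne hcx (σ.injective.ne (hc x hxS).ne'), hsplit x hxS u hu (hxm.trans hmt) htu⟩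
    obtain rfl | hyS := Finset.mem_insert.1 hy
    · exact hxc
    · by_contra! hyx
      exact hmy.not_ge (hmax y hyS (hyx.trans_lt hxc))
  · refine ⟨t, ht, Or.inl fun x hx y hy hxt hty => ?_⟩
    have hxS := mem_of_le ht hx hxt
    obtain rfl | hyS := Finset.mem_insert.1 hy
    · exact (hsplit x hxS m hmS hxt htm).trans hmc
    · exact hsplit x hxS y hyS hxt hty

theorem exists_sumSplitAt (h24 : ¬Contains2413 σ) (h31 : ¬Contains3142 σ) {S : Finset (Fin n)}
    (hS : S.Nontrivial) :
    ∃ t ∈ S, (∃ u ∈ S, t < u) ∧ (SumSplitAt σ S t ∨ SumSplitAt (σ.trans Fin.revPerm) S t) := by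
  classical
  induction S using Finset.induction_on_max with
  | empty => exact absurd hS Finset.not_nontrivial_empty
  | insert c S hc ih =>
    obtain ⟨t', ht', hsplit'⟩ : ∃ t' ∈ S,
        SumSplitAt σ (insert c S) t' ∨ SumSplitAt (σ.trans Fin.revPerm) (insert c S) t' := by
      have hSne : S.Nonempty := Finset.nonempty_iff_ne_empty.2 fun h => by
        simp [h] at hS
      rcases hSne.exists_eq_singleton_or_nontrivial with ⟨s, rfl⟩ | hS'
      · have hsc := hc s (Finset.mem_singleton_self s)
        refine ⟨s, Finset.mem_singleton_self s, ?_⟩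
        have hle : ∀ x ∈ ({s} : Finset (Fin n)), x ≤ s := fun x hx => (Finset.mem_singleton.1 hx).le
        rcases lt_or_gt_of_ne (σ.injective.ne hsc.ne) with hlt | hgt
        · exact Or.inl (sumSplitAt_insert_of_forall_lt (by simpa using hlt) hle hsc)
        · exact Or.inr (sumSplitAt_insert_of_forall_lt (by simpa using hgt) hle hsc)
      obtain ⟨t, ht, ⟨u, hu, htu⟩, hsplit⟩ := ih hS'
      rcases hsplit with hsplit | hsplit
      · exact sumSplitAt_insert h31 hc ht hu htu hsplit
      · have hrev : (σ.trans Fin.revPerm).trans Fin.revPerm = σ := by ext; simp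
        simpa only [hrev, or_comm] using sumSplitAt_insert
          (fun h => h24 (contains2413_of_contains3142_trans_revPerm h)) hc ht hu htu hsplit
    exact ⟨t', Finset.mem_insert_of_mem ht', ⟨c, Finset.mem_insert_self c S, hc t' ht'⟩, hsplit'⟩

theorem IsInterval.exists_split {I : Finset (Fin n)} (h24 : ¬Contains2413 π)
    (h31 : ¬Contains3142 π) (hI : IsInterval π I) (hI2 : I.Nontrivial) :
    ∃ A B, IsInterval π A ∧ IsInterval π B ∧ A.Nonempty ∧ B.Nonempty ∧ A ∪ B = I ∧
      ∀ a ∈ A, ∀ b ∈ B, a < b := by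
  classical
  obtain ⟨t, ht, ⟨u, hu, htu⟩, hsplit⟩ := exists_sumSplitAt (σ := π.symm)
    (fun h => h31 (contains3142_of_contains2413_symm h))
    (fun h => h24 (contains2413_of_contains3142_symm h)) hI2
  rw [sumSplitAt_trans_revPerm] at hsplit
  set A := I.filter (· ≤ t)
  set B := I.filter fun v => ¬v ≤ t
  have hunion : A ∪ B = I := Finset.filter_union_filter_not_eq _ _
  have hlt : ∀ a ∈ A, ∀ b ∈ B, a < b := by
    simp only [A, B, Finset.mem_filter, not_le]
    exact fun a ha b hb => ha.2.trans_lt hb.2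
  have hpos : (∀ a ∈ A, ∀ b ∈ B, π.symm a < π.symm b) ∨
      ∀ a ∈ A, ∀ b ∈ B, π.symm b < π.symm a := by
    simp only [A, B, Finset.mem_filter, not_le]
    exact hsplit.imp (fun h a ha b hb => h a ha.1 b hb.1 ha.2 hb.2)
      (fun h a ha b hb => h a ha.1 b hb.1 ha.2 hb.2)
  obtain ⟨hA, hB⟩ := (hunion ▸ hI).of_union hlt hpos
  exact ⟨A, B, hA, hB, ⟨t, Finset.mem_filter.2 ⟨ht, le_rfl⟩⟩,
    ⟨u, Finset.mem_filter.2 ⟨hu, not_le.2 htu⟩⟩, hunion, hlt⟩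

end Split

section Covers

variable {n : ℕ} {π : Equiv.Perm (Fin n)}

theorem IsInterval.not_three_intervalCovers {I : Finset (Fin n)} (h24 : ¬Contains2413 π)
    (h31 : ¬Contains3142 π) (hI : IsInterval π I) :
    ¬ ∃ J₁ J₂ J₃ : Finset (Fin n), J₁ ≠ J₂ ∧ J₁ ≠ J₃ ∧ J₂ ≠ J₃ ∧
      (IsInterval π J₁ ∧ J₁.Nonempty ∧ IntervalCover π I J₁) ∧
      (IsInterval π J₂ ∧ J₂.Nonempty ∧ IntervalCover π I J₂) ∧
      (IsInterval π J₃ ∧ J₃.Nonempty ∧ IntervalCover π I J₃) := by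
  rintro ⟨J₁, J₂, J₃, h₁₂, h₁₃, h₂₃, hJ₁, hJ₂, hJ₃⟩
  have hI2 : I.Nontrivial := by
    obtain ⟨x, hx⟩ := hJ₁.2.1
    obtain ⟨y, hy, hyJ⟩ := Finset.exists_of_ssubset hJ₁.2.2.1
    exact ⟨x, hJ₁.2.2.1.subset hx, y, hy, fun h => hyJ (h ▸ hx)⟩
  obtain ⟨A, B, hA, hB, hAne, hBne, rfl, hAB⟩ := hI.exists_split h24 h31 hI2
  have hdisj : Disjoint A B := Finset.disjoint_left.2 fun a ha hb => lt_irrefl a (hAB a ha a hb)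
  have slot : ∀ {J}, IsInterval π J ∧ J.Nonempty ∧ IntervalCover π (A ∪ B) J → A ⊆ J ∨ B ⊆ J :=
    fun ⟨hJ, hJne, hc⟩ => hc.subset_or_subset hJ hJne hA hB hAne hdisj rfl
  have sameA : ∀ {J J'}, IsInterval π J ∧ J.Nonempty ∧ IntervalCover π (A ∪ B) J →
      IsInterval π J' ∧ J'.Nonempty ∧ IntervalCover π (A ∪ B) J' → A ⊆ J → A ⊆ J' → J = J' :=
    fun ⟨hJ, _, hc⟩ ⟨hJ', _, hc'⟩ hAJ hAJ' =>
      hc.eq_of_mem hc' hJ hJ' (hAJ (A.min'_mem hAne)) (hAJ' (A.min'_mem hAne)) <| Or.inl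
        fun x hx => (Finset.mem_union.1 hx).elim (A.min'_le x) fun hxB =>
          (hAB _ (A.min'_mem hAne) x hxB).le
  have sameB : ∀ {J J'}, IsInterval π J ∧ J.Nonempty ∧ IntervalCover π (A ∪ B) J →
      IsInterval π J' ∧ J'.Nonempty ∧ IntervalCover π (A ∪ B) J' → B ⊆ J → B ⊆ J' → J = J' :=
    fun ⟨hJ, _, hc⟩ ⟨hJ', _, hc'⟩ hBJ hBJ' =>
      hc.eq_of_mem hc' hJ hJ' (hBJ (B.max'_mem hBne)) (hBJ' (B.max'_mem hBne)) <| Or.inr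
        fun x hx => (Finset.mem_union.1 hx).elim (fun hxA => (hAB x hxA _ (B.max'_mem hBne)).le)
          (B.le_max' x)
  rcases slot hJ₁ with h₁ | h₁ <;> rcases slot hJ₂ with h₂ | h₂ <;>
    rcases slot hJ₃ with h₃ | h₃
  exacts [h₁₂ (sameA hJ₁ hJ₂ h₁ h₂), h₁₂ (sameA hJ₁ hJ₂ h₁ h₂), h₁₃ (sameA hJ₁ hJ₃ h₁ h₃),
    h₂₃ (sameB hJ₂ hJ₃ h₂ h₃), h₂₃ (sameA hJ₂ hJ₃ h₂ h₃), h₁₃ (sameB hJ₁ hJ₃ h₁ h₃),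
    h₁₂ (sameB hJ₁ hJ₂ h₁ h₂), h₁₂ (sameB hJ₁ hJ₂ h₁ h₂)]

theorem exists_three_intervalCovers {x y z : Fin n} (hxy : x ≠ y) (hxz : x ≠ z)
    (hclosed : ∀ K, IsInterval π K → (x ∈ K ∧ y ∈ K) ∨ (x ∈ K ∧ z ∈ K) ∨ (y ∈ K ∧ z ∈ K) →
      x ∈ K ∧ y ∈ K ∧ z ∈ K) :
    ∃ I : Finset (Fin n), IsInterval π I ∧ I.Nonempty ∧
      ∃ J₁ J₂ J₃ : Finset (Fin n), J₁ ≠ J₂ ∧ J₁ ≠ J₃ ∧ J₂ ≠ J₃ ∧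
        (IsInterval π J₁ ∧ J₁.Nonempty ∧ IntervalCover π I J₁) ∧
        (IsInterval π J₂ ∧ J₂.Nonempty ∧ IntervalCover π I J₂) ∧
        (IsInterval π J₃ ∧ J₃.Nonempty ∧ IntervalCover π I J₃) := by
  classical
  obtain ⟨I, hI, hmin⟩ := (Finset.univ.filter fun K => IsInterval π K ∧ x ∈ K ∧ y ∈ K ∧ z ∈ K)
    |>.exists_min_image Finset.card ⟨Finset.univ, by simp [isInterval_univ]⟩
  simp only [Finset.mem_filter, Finset.mem_univ, true_and] at hI hmin
  obtain ⟨hI, hxI, hyI, hzI⟩ := hI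
  have child : ∀ {v w}, v ∈ I → w ∈ I → v ≠ w →
      ∃ C, (IsInterval π C ∧ C.Nonempty ∧ IntervalCover π I C) ∧ v ∈ C := fun hv hw hvw => by
    obtain ⟨C, hC, hvC, hc⟩ := exists_intervalCover_of_ssubset (isInterval_singleton π _)
      ((Finset.ssubset_iff_of_subset (Finset.singleton_subset_iff.2 hv)).2
        ⟨_, hw, by simpa using hvw.symm⟩)
    exact ⟨C, ⟨hC, ⟨_, hvC (Finset.mem_singleton_self _)⟩, hc⟩, hvC (Finset.mem_singleton_self _)⟩
  have not_all : ∀ {C}, IsInterval π C ∧ C.Nonempty ∧ IntervalCover π I C →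
      ¬(x ∈ C ∧ y ∈ C ∧ z ∈ C) := fun ⟨hC, _, hc⟩ hxyz =>
    (Finset.card_lt_card hc.1).not_ge (hmin _ ⟨hC, hxyz⟩)
  obtain ⟨Cx, hCx, hxCx⟩ := child hxI hyI hxy
  obtain ⟨Cy, hCy, hyCy⟩ := child hyI hxI hxy.symm
  obtain ⟨Cz, hCz, hzCz⟩ := child hzI hxI hxz.symm
  refine ⟨I, hI, ⟨x, hxI⟩, Cx, Cy, Cz, ?_, ?_, ?_, hCx, hCy, hCz⟩
  · rintro rfl
    exact not_all hCx (hclosed Cx hCx.1 (Or.inl ⟨hxCx, hyCy⟩))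
  · rintro rfl
    exact not_all hCx (hclosed Cx hCx.1 (Or.inr (Or.inl ⟨hxCx, hzCz⟩)))
  · rintro rfl
    exact not_all hCy (hclosed Cy hCy.1 (Or.inr (Or.inr ⟨hyCy, hzCz⟩)))

theorem exists_between_of_contains (h : Contains2413 π ∨ Contains3142 π) :
    ∃ a b c d : Fin n, a < b ∧ b < c ∧ c < d ∧
      π a ∈ Set.uIcc (π b) (π c) ∧ π d ∈ Set.uIcc (π a) (π b) := by
  rcases h with ⟨a, b, c, d, hab, hbc, hcd, h₁, h₂, h₃⟩ | ⟨a, b, c, d, hab, hbc, hcd, h₁, h₂, h₃⟩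
  · exact ⟨a, b, c, d, hab, hbc, hcd, Set.mem_uIcc.2 (Or.inr ⟨h₁.le, (h₂.trans h₃).le⟩),
      Set.mem_uIcc.2 (Or.inl ⟨h₂.le, h₃.le⟩)⟩
  · exact ⟨a, b, c, d, hab, hbc, hcd, Set.mem_uIcc.2 (Or.inl ⟨(h₁.trans h₂).le, h₃.le⟩),
      Set.mem_uIcc.2 (Or.inr ⟨h₁.le, h₂.le⟩)⟩

theorem exists_three_intervalCovers_of_contains (h : Contains2413 π ∨ Contains3142 π) :
    ∃ I : Finset (Fin n), IsInterval π I ∧ I.Nonempty ∧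
      ∃ J₁ J₂ J₃ : Finset (Fin n), J₁ ≠ J₂ ∧ J₁ ≠ J₃ ∧ J₂ ≠ J₃ ∧
        (IsInterval π J₁ ∧ J₁.Nonempty ∧ IntervalCover π I J₁) ∧
        (IsInterval π J₂ ∧ J₂.Nonempty ∧ IntervalCover π I J₂) ∧
        (IsInterval π J₃ ∧ J₃.Nonempty ∧ IntervalCover π I J₃) := by
  obtain ⟨a, b, c, d, hab, hbc, hcd, ha, hd⟩ := exists_between_of_contains h
  refine exists_three_intervalCovers (π.injective.ne hab.ne) (π.injective.ne (hab.trans hbc).ne)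
    fun K hK hpair => ?_
  rcases hpair with ⟨haK, hbK⟩ | ⟨haK, hcK⟩ | ⟨hbK, hcK⟩
  · have hdK := hK.1.mem_of_mem_uIcc haK hbK hd
    exact ⟨haK, hbK, hK.apply_mem_of_le haK hdK (hab.trans hbc).le hcd.le⟩
  · exact ⟨haK, hK.apply_mem_of_le haK hcK hab.le hbc.le, hcK⟩
  · exact ⟨hK.1.mem_of_mem_uIcc hbK hcK ha, hbK, hcK⟩

end Covers

/-- π is separable (avoids 2413 and 3142) if and only if its interval
poset is binary, i.e. no element covers three pairwise distinct elements. -/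
theorem separable_iff_binary (n : ℕ) (π : Equiv.Perm (Fin n)) :
    (¬ Contains2413 π ∧ ¬ Contains3142 π) ↔
      ∀ I : Finset (Fin n), IsInterval π I → I.Nonempty →
        ¬ ∃ J₁ J₂ J₃ : Finset (Fin n), J₁ ≠ J₂ ∧ J₁ ≠ J₃ ∧ J₂ ≠ J₃ ∧
          (IsInterval π J₁ ∧ J₁.Nonempty ∧ IntervalCover π I J₁) ∧
          (IsInterval π J₂ ∧ J₂.Nonempty ∧ IntervalCover π I J₂) ∧
          (IsInterval π J₃ ∧ J₃.Nonempty ∧ IntervalCover π I J₃) := by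
  constructor
  · rintro ⟨h24, h31⟩ I hI -
    exact hI.not_three_intervalCovers h24 h31
  · rw [← not_or]
    intro hbinary hpattern
    obtain ⟨I, hI, hIne, hcovers⟩ := exists_three_intervalCovers_of_contains hpattern
    exact hbinary I hI hIne hcovers
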